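/- (Bernstein–Szegő density martingale.) Let β > 0 and let (α_j)_{j≥0} be a CβE(β) Verblunsky sequence, with Φ_n* defined by the Szegő recursion. Fix θ ∈ ℝ. Then the process X_n := Π_{j=0}^{n−1} (1 − |α_j|²) / |Φ_n*(e^{iθ})|² (which is well defined since Φ_n* has no zeros on the closed unit disc) is a martingale with respect to the filtration (F_n): for every n, E[X_{n+1} | F_n] = X_n almost surely; in particular E[X_n] = 1 for all n. -/

import Mathlib

/-!
With `Q_n = z Φ_n / Φ_n*`, which is unimodular on the unit circle, the Szegő recursion reads
`Φ_{n+1}* = Φ_n* (1 - α_n Q_n)`, so `X_{n+1} = X_n · P(α_n, conj Q_n)`, where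
`P(w, ζ) = (1 - |w|²) / |ζ - w|²` is the Poisson kernel of the unit disc. Since `X_n` and `Q_n` are
`F_n`-measurable and `α_n` is independent of `F_n`, the martingale property reduces to
`∫ P(w, ζ) dμ(w) = 1` for the law `μ` of `α_n` and every `|ζ| = 1`. The law is rotation invariant,
so this integral does not depend on `ζ`; averaging over `ζ` on the circle and using the Poisson
formula for the constant function `1` gives `μ(ℂ) = 1`.
-/

open MeasureTheory ProbabilityTheory

/-- The law on `ℂ` with density `w ↦ (b/π)(1-|w|²)^{b-1} 1_{|w|<1}` with respect to
planar Lebesgue measure. -/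
noncomputable def verblunskyLaw (b : ℝ) : Measure ℂ :=
  volume.withDensity fun w =>
    ENNReal.ofReal (if ‖w‖ < 1 then (b / Real.pi) * (1 - ‖w‖ ^ 2) ^ (b - 1) else 0)

/-- `(α_j)_{j≥0}` is a CβE(β) Verblunsky sequence. -/
def IsCbetaE {Ω : Type*} [MeasurableSpace Ω] (P : Measure Ω) (β : ℝ) (α : ℕ → Ω → ℂ) : Prop :=
  (∀ j, Measurable (α j)) ∧
  iIndepFun α P ∧
  ∀ j : ℕ, P.map (α j) = verblunskyLaw (β * ((j : ℝ) + 1) / 2)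

/-- Szegő recursion: `szego α n z = (Φ_n(z), Φ_n*(z))`. -/
noncomputable def szego (α : ℕ → ℂ) : ℕ → ℂ → ℂ × ℂ
  | 0, _ => (1, 1)
  | (k + 1), z =>
      (z * (szego α k z).1 - (starRingEnd ℂ) (α k) * (szego α k z).2,
       (szego α k z).2 - α k * z * (szego α k z).1)

noncomputable def szegoPhiStar (α : ℕ → ℂ) (n : ℕ) (z : ℂ) : ℂ := (szego α n z).2

open ComplexConjugate Set Real

section Poisson

theorem poissonKernel_zero_conj {q : ℂ} (hq : ‖q‖ = 1) (w : ℂ) :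
    poissonKernel 0 w (conj q) = (1 - ‖w‖ ^ 2) / ‖1 - w * q‖ ^ 2 := by
  have h : 1 - w * q = q * (conj q - w) := by
    rw [mul_sub, Complex.mul_conj, Complex.normSq_eq_norm_sq, hq]; push_cast; ring
  simp [poissonKernel, h, hq]

theorem poissonKernel_zero_smul (c : Circle) (w ζ : ℂ) :
    poissonKernel 0 (c • w) ζ = poissonKernel 0 w (c⁻¹ • ζ) := by
  have h : ζ - c * w = c * (c⁻¹ * ζ - w) := by
    rw [mul_sub, ← mul_assoc, Circle.coe_inv, mul_inv_cancel₀ c.coe_ne_zero, one_mul]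
  simp [poissonKernel, Circle.smul_def, h, Circle.norm_coe]

theorem poissonKernel_zero_nonneg {w ζ : ℂ} (hw : ‖w‖ < 1) (hζ : ‖ζ‖ = 1) :
    0 ≤ poissonKernel 0 w ζ := by
  rw [poissonKernel]
  simp only [sub_zero, hζ]
  exact div_nonneg (by nlinarith [norm_nonneg w]) (sq_nonneg _)

theorem measurable_poissonKernel_zero : Measurable (Function.uncurry (poissonKernel 0)) := by
  unfold poissonKernel
  fun_prop

theorem lintegral_poissonKernel_circleMap {w : ℂ} (hw : ‖w‖ < 1) :
    ∫⁻ (ψ : ℝ) in Ioc 0 (2 * π), ENNReal.ofReal (poissonKernel 0 w (circleMap 0 1 ψ)) =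
      ENNReal.ofReal (2 * π) := by
  have hne : ∀ ψ, circleMap 0 1 ψ - w ≠ 0 := fun ψ h => by
    have := congrArg norm (sub_eq_zero.mp h)
    simp at this
    linarith
  have hcont : Continuous fun ψ => poissonKernel 0 w (circleMap 0 1 ψ) := by
    unfold poissonKernel
    simp only [sub_zero]
    exact Continuous.div (by fun_prop) (by fun_prop) fun ψ =>
      pow_ne_zero 2 (norm_ne_zero_iff.mpr (hne ψ))
  rw [← ofReal_integral_eq_lintegral_ofReal hcont.integrableOn_Ioc
    (ae_of_all _ fun ψ => poissonKernel_zero_nonneg hw (by simp))]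
  congr 1
  have havg := (InnerProductSpace.harmonicContOnCl_const (c := (1 : ℝ))
    ).circleAverage_poissonKernel_smul (mem_ball_zero_iff.mpr hw)
  rw [Real.circleAverage_def, intervalIntegral.integral_of_le two_pi_pos.le] at havg
  simp only [Pi.smul_apply', smul_eq_mul, mul_one] at havg
  field_simp at havg
  linarith

theorem lintegral_poissonKernel_of_smulInvariantMeasure {μ : Measure ℂ} [SFinite μ]
    [SMulInvariantMeasure Circle ℂ μ] (hμ : ∀ᵐ w ∂μ, ‖w‖ < 1) {ζ : ℂ} (hζ : ‖ζ‖ = 1) :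
    ∫⁻ w, ENNReal.ofReal (poissonKernel 0 w ζ) ∂μ = μ univ := by
  obtain ⟨ζ, rfl⟩ : ∃ c : Circle, (c : ℂ) = ζ := ⟨⟨ζ, mem_sphere_zero_iff_norm.mpr hζ⟩, rfl⟩
  have hmeas : Measurable fun p : ℝ × ℂ =>
      ENNReal.ofReal (poissonKernel 0 p.2 (circleMap 0 1 p.1)) :=
    (measurable_poissonKernel_zero.comp (measurable_snd.prodMk
      ((continuous_circleMap 0 1).measurable.comp measurable_fst))).ennreal_ofReal
  have hrot : ∀ ψ, ∫⁻ w, ENNReal.ofReal (poissonKernel 0 w ζ) ∂μ =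
      ∫⁻ w, ENNReal.ofReal (poissonKernel 0 w (circleMap 0 1 ψ)) ∂μ := by
    intro ψ
    rw [← (measurePreserving_smul (ζ * (Circle.exp ψ)⁻¹) μ).lintegral_comp
      (f := fun w => ENNReal.ofReal (poissonKernel 0 w ζ))
      measurable_poissonKernel_zero.of_uncurry_right.ennreal_ofReal]
    have hζψ : (ζ * (Circle.exp ψ)⁻¹)⁻¹ • (ζ : ℂ) = circleMap 0 1 ψ := by
      simp [Circle.smul_def, circleMap]
    simp_rw [poissonKernel_zero_smul, hζψ]
  have h2π : ENNReal.ofReal (2 * π) ≠ 0 := by simp [pi_pos]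
  refine (ENNReal.mul_left_inj h2π ENNReal.ofReal_ne_top).mp ?_
  calc (∫⁻ w, ENNReal.ofReal (poissonKernel 0 w ζ) ∂μ) * ENNReal.ofReal (2 * π)
      = ∫⁻ (ψ : ℝ) in Ioc 0 (2 * π), ∫⁻ w, ENNReal.ofReal (poissonKernel 0 w ζ) ∂μ := by
        rw [setLIntegral_const, Real.volume_Ioc, sub_zero]
    _ = ∫⁻ (ψ : ℝ) in Ioc 0 (2 * π),
          ∫⁻ w, ENNReal.ofReal (poissonKernel 0 w (circleMap 0 1 ψ)) ∂μ :=
        lintegral_congr fun ψ => hrot ψ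
    _ = ∫⁻ w, (∫⁻ (ψ : ℝ) in Ioc 0 (2 * π),
          ENNReal.ofReal (poissonKernel 0 w (circleMap 0 1 ψ))) ∂μ :=
        lintegral_lintegral_swap hmeas.aemeasurable
    _ = ∫⁻ _, ENNReal.ofReal (2 * π) ∂μ :=
        lintegral_congr_ae (hμ.mono fun w hw => lintegral_poissonKernel_circleMap hw)
    _ = μ univ * ENNReal.ofReal (2 * π) := by rw [lintegral_const, mul_comm]

end Poisson

section RotationInvariance

instance : SMulInvariantMeasure Circle ℂ volume where
  measure_preimage_smul c _ hs := by
    have h : (c • · : ℂ → ℂ) = rotation c := funext fun z => (rotation_apply c z).symm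
    rw [h]
    exact (rotation c).measurePreserving.measure_preimage hs.nullMeasurableSet

theorem smulInvariantMeasure_withDensity {G α : Type*} [Group G] [MulAction G α] [MeasurableSpace α]
    [MeasurableConstSMul G α] (μ : Measure α) [SMulInvariantMeasure G α μ] {ρ : α → ENNReal}
    (hρ : ∀ (c : G) x, ρ (c • x) = ρ x) : SMulInvariantMeasure G α (μ.withDensity ρ) where
  measure_preimage_smul c s hs := by
    rw [withDensity_apply _ (hs.preimage (measurable_const_smul c)), withDensity_apply _ hs]
    calc ∫⁻ x in (c • ·) ⁻¹' s, ρ x ∂μ = ∫⁻ x in (c • ·) ⁻¹' s, ρ (c • x) ∂μ := by simp_rw [hρ]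
      _ = ∫⁻ x in s, ρ x ∂μ := (measurePreserving_smul c μ).setLIntegral_comp_preimage_emb
        (MeasurableEquiv.smul c).measurableEmbedding ρ s

instance (b : ℝ) : SMulInvariantMeasure Circle ℂ (verblunskyLaw b) :=
  smulInvariantMeasure_withDensity volume fun c w => by
    simp [Circle.smul_def, Circle.norm_coe]

theorem ae_norm_lt_one_verblunskyLaw (b : ℝ) : ∀ᵐ w ∂verblunskyLaw b, ‖w‖ < 1 := by
  have hs : MeasurableSet {w : ℂ | ¬‖w‖ < 1} :=
    (measurableSet_lt measurable_norm measurable_const).compl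
  rw [ae_iff, verblunskyLaw, withDensity_apply _ hs]
  exact (setLIntegral_congr_fun hs fun w (hw : ¬‖w‖ < 1) => by simp [hw]).trans lintegral_zero

end RotationInvariance

section Independence

variable {Ω E F : Type*} {m mΩ : MeasurableSpace Ω} [MeasurableSpace E] [MeasurableSpace F]
  {P : Measure Ω} [IsFiniteMeasure P] {W : Ω → E} {A : Ω → F}
  {g : E → F → ENNReal}

theorem lintegral_comp_eq_lintegral_lintegral_of_indep (hm : m ≤ mΩ) (hW : Measurable[m] W)
    (hA : Measurable A) (hind : Indep m (MeasurableSpace.comap A ‹_›) P)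
    (hg : Measurable (Function.uncurry g)) :
    ∫⁻ ω, g (W ω) (A ω) ∂P = ∫⁻ ω, ∫⁻ a, g (W ω) a ∂(P.map A) ∂P := by
  have hW' : Measurable W := hW.mono hm le_rfl
  have hWA : IndepFun W A P := indep_of_indep_of_le_left hind hW.comap_le
  calc ∫⁻ ω, g (W ω) (A ω) ∂P
      = ∫⁻ p, Function.uncurry g p ∂(P.map fun ω => (W ω, A ω)) :=
        (lintegral_map hg (hW'.prodMk hA)).symm
    _ = ∫⁻ p, Function.uncurry g p ∂((P.map W).prod (P.map A)) := by
        rw [hWA.map_prod_eq_prod_map_map hW'.aemeasurable hA.aemeasurable]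
    _ = ∫⁻ w, ∫⁻ a, g w a ∂(P.map A) ∂(P.map W) := lintegral_prod _ hg.aemeasurable
    _ = ∫⁻ ω, ∫⁻ a, g (W ω) a ∂(P.map A) ∂P := lintegral_map hg.lintegral_prod_right' hW'

theorem setLIntegral_comp_eq_setLIntegral_lintegral_of_indep (hm : m ≤ mΩ) (hW : Measurable[m] W)
    (hA : Measurable A) (hind : Indep m (MeasurableSpace.comap A ‹_›) P)
    (hg : Measurable (Function.uncurry g)) {s : Set Ω} (hs : MeasurableSet[m] s) :
    ∫⁻ ω in s, g (W ω) (A ω) ∂P = ∫⁻ ω in s, ∫⁻ a, g (W ω) a ∂(P.map A) ∂P := by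
  -- `1_s` is `m`-measurable, so it can be frozen together with `W`.
  have indicator_eq_mul : ∀ (f : Ω → ENNReal) ω, s.indicator f ω = s.indicator 1 ω * f ω := by
    intro f ω
    by_cases h : ω ∈ s <;> simp [h]
  have hg' : Measurable (Function.uncurry fun (p : ENNReal × E) (a : F) => p.1 * g p.2 a) :=
    measurable_fst.fst.mul (hg.comp (measurable_fst.snd.prodMk measurable_snd))
  calc ∫⁻ ω in s, g (W ω) (A ω) ∂P = ∫⁻ ω, s.indicator 1 ω * g (W ω) (A ω) ∂P := by
        rw [← lintegral_indicator (hm _ hs)]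
        exact lintegral_congr fun ω => indicator_eq_mul _ ω
    _ = ∫⁻ ω, ∫⁻ a, s.indicator 1 ω * g (W ω) a ∂(P.map A) ∂P :=
        lintegral_comp_eq_lintegral_lintegral_of_indep hm
          (((measurable_const : Measurable[m] (1 : Ω → ENNReal)).indicator hs).prodMk hW)
          hA hind hg'
    _ = ∫⁻ ω, s.indicator 1 ω * ∫⁻ a, g (W ω) a ∂(P.map A) ∂P :=
        lintegral_congr fun ω => lintegral_const_mul _ hg.of_uncurry_left
    _ = ∫⁻ ω in s, ∫⁻ a, g (W ω) a ∂(P.map A) ∂P := by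
        rw [← lintegral_indicator (hm _ hs)]
        exact lintegral_congr fun ω => (indicator_eq_mul (fun ω => ∫⁻ a, g (W ω) a ∂(P.map A)) ω).symm

end Independence

theorem martingale_of_setLIntegral_eq_succ {Ω : Type*} {mΩ : MeasurableSpace Ω} {P : Measure Ω}
    [IsFiniteMeasure P] {ℱ : Filtration ℕ mΩ} {f : ℕ → Ω → ℝ}
    (hadp : StronglyAdapted ℱ f) (hnn : ∀ n, 0 ≤ᵐ[P] f n) (hint : Integrable (f 0) P)
    (hf : ∀ n s, MeasurableSet[ℱ n] s →
      ∫⁻ ω in s, ENNReal.ofReal (f (n + 1) ω) ∂P = ∫⁻ ω in s, ENNReal.ofReal (f n ω) ∂P) :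
    Martingale f ℱ P := by
  have hmeas n : AEStronglyMeasurable (f n) P := ((hadp n).mono (ℱ.le n)).aestronglyMeasurable
  have hlint n : ∫⁻ ω, ENNReal.ofReal (f n ω) ∂P = ∫⁻ ω, ENNReal.ofReal (f 0 ω) ∂P := by
    induction n with
    | zero => rfl
    | succ n ih => simpa [ih] using hf n univ MeasurableSet.univ
  have hint n : Integrable (f n) P := by
    refine ⟨hmeas n, ?_⟩
    rw [hasFiniteIntegral_iff_ofReal (hnn n), hlint]
    exact (hasFiniteIntegral_iff_ofReal (hnn 0)).mp hint.2
  refine martingale_of_setIntegral_eq_succ hadp hint fun n s hs => ?_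
  rw [integral_eq_lintegral_of_nonneg_ae (ae_restrict_of_ae (hnn n)) (hmeas n).restrict,
    integral_eq_lintegral_of_nonneg_ae (ae_restrict_of_ae (hnn (n + 1))) (hmeas (n + 1)).restrict,
    hf n s hs]

theorem ProbabilityTheory.iIndepFun.indep_iSup_comap_lt {Ω E : Type*} {mΩ : MeasurableSpace Ω}
    [MeasurableSpace E] {P : Measure Ω} {X : ℕ → Ω → E} (hX : ∀ j, Measurable (X j))
    (hind : iIndepFun X P) (n : ℕ) :
    Indep (⨆ j ∈ Set.Iio n, MeasurableSpace.comap (X j) inferInstance)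
      (MeasurableSpace.comap (X n) inferInstance) P := by
  have := indep_iSup_of_disjoint (fun j => (hX j).comap_le) ((iIndepFun_iff_iIndep _ _ _).mp hind)
    (Set.disjoint_singleton_right.mpr (Set.self_notMem_Iio (a := n)))
  rwa [iSup_singleton] at this

section Szego

variable {a : ℕ → ℂ} {z : ℂ}

noncomputable def szegoQ (a : ℕ → ℂ) (n : ℕ) (z : ℂ) : ℂ :=
  z * (szego a n z).1 / szegoPhiStar a n z

noncomputable def bernsteinSzegoDensity (a : ℕ → ℂ) (n : ℕ) (z : ℂ) : ℝ :=
  (∏ j ∈ Finset.range n, (1 - ‖a j‖ ^ 2)) / ‖szegoPhiStar a n z‖ ^ 2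

theorem szegoPhiStar_succ (a : ℕ → ℂ) (n : ℕ) (z : ℂ) :
    szegoPhiStar a (n + 1) z = szegoPhiStar a n z - a n * z * (szego a n z).1 := rfl

theorem szegoPhiStar_eq_pow_mul_conj (hz : ‖z‖ = 1) (a : ℕ → ℂ) (n : ℕ) :
    szegoPhiStar a n z = z ^ n * conj (szego a n z).1 := by
  have hz0 : z ≠ 0 := by rintro rfl; simp at hz
  have hconj : conj z = z⁻¹ := by
    rw [Complex.inv_def, Complex.normSq_eq_norm_sq, hz]; simp
  induction n with
  | zero => simp [szegoPhiStar, szego]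
  | succ k ih =>
    have ih' : z ^ k * conj (szegoPhiStar a k z) = (szego a k z).1 := by
      rw [ih, map_mul, map_pow, hconj, Complex.conj_conj, ← mul_assoc, ← mul_pow,
        mul_inv_cancel₀ hz0, one_pow, one_mul]
    rw [szegoPhiStar_succ, ih]
    simp only [szego, map_sub, map_mul, hconj, Complex.conj_conj]
    rw [← szegoPhiStar]
    linear_combination (a k * z) * ih' - (z ^ k * conj (szego a k z).1) * mul_inv_cancel₀ hz0

theorem norm_szego_fst_eq_norm_szegoPhiStar (hz : ‖z‖ = 1) (a : ℕ → ℂ) (n : ℕ) :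
    ‖(szego a n z).1‖ = ‖szegoPhiStar a n z‖ := by
  simp [szegoPhiStar_eq_pow_mul_conj hz, hz]

theorem szegoPhiStar_ne_zero (hz : ‖z‖ = 1) {n : ℕ} (ha : ∀ j < n, ‖a j‖ < 1) :
    szegoPhiStar a n z ≠ 0 := by
  induction n with
  | zero => simp [szegoPhiStar, szego]
  | succ k ih =>
    have hk := ih fun j hj => ha j (by omega)
    rw [szegoPhiStar_succ, sub_ne_zero]
    intro h
    have hnorm := congrArg norm h
    rw [norm_mul, norm_mul, hz, mul_one, norm_szego_fst_eq_norm_szegoPhiStar hz] at hnorm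
    nlinarith [ha k (by omega), norm_pos_iff.mpr hk]

theorem norm_szegoQ (hz : ‖z‖ = 1) {n : ℕ} (ha : ∀ j < n, ‖a j‖ < 1) : ‖szegoQ a n z‖ = 1 := by
  rw [szegoQ, norm_div, norm_mul, hz, one_mul, norm_szego_fst_eq_norm_szegoPhiStar hz,
    div_self (norm_ne_zero_iff.mpr (szegoPhiStar_ne_zero hz ha))]

theorem bernsteinSzegoDensity_succ (hz : ‖z‖ = 1) {n : ℕ} (ha : ∀ j < n, ‖a j‖ < 1) :
    bernsteinSzegoDensity a (n + 1) z =
      bernsteinSzegoDensity a n z * poissonKernel 0 (a n) (conj (szegoQ a n z)) := by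
  have hΦ := szegoPhiStar_ne_zero hz ha
  have hfactor : szegoPhiStar a (n + 1) z = szegoPhiStar a n z * (1 - a n * szegoQ a n z) := by
    rw [szegoPhiStar_succ, szegoQ]; field_simp
  rw [poissonKernel_zero_conj (norm_szegoQ hz ha), bernsteinSzegoDensity, bernsteinSzegoDensity,
    Finset.prod_range_succ, hfactor, norm_mul, mul_pow, div_mul_div_comm]

theorem bernsteinSzegoDensity_zero (a : ℕ → ℂ) (z : ℂ) : bernsteinSzegoDensity a 0 z = 1 := by
  simp [bernsteinSzegoDensity, szegoPhiStar, szego]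

theorem bernsteinSzegoDensity_nonneg {a : ℕ → ℂ} {n : ℕ} (ha : ∀ j < n, ‖a j‖ < 1) (z : ℂ) :
    0 ≤ bernsteinSzegoDensity a n z :=
  div_nonneg (Finset.prod_nonneg fun j hj => by
    nlinarith [ha j (Finset.mem_range.mp hj), norm_nonneg (a j)]) (sq_nonneg _)

end Szego

section Measurability

variable {Ω : Type*} {m : MeasurableSpace Ω} {α : ℕ → Ω → ℂ} {n : ℕ}

theorem measurable_szego (hα : ∀ j < n, Measurable (α j)) (z : ℂ) :
    Measurable fun ω => szego (fun i => α i ω) n z := by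
  induction n with
  | zero => exact measurable_const
  | succ k ih =>
    have hk := ih fun j hj => hα j (by omega)
    have hαk := hα k (by omega)
    have hconj := Complex.continuous_conj.measurable.comp hαk
    exact ((measurable_const.mul hk.fst).sub (hconj.mul hk.snd)).prodMk
      (hk.snd.sub ((hαk.mul measurable_const).mul hk.fst))

theorem measurable_bernsteinSzegoDensity (hα : ∀ j < n, Measurable (α j)) (z : ℂ) :
    Measurable fun ω => bernsteinSzegoDensity (fun i => α i ω) n z :=
  (Finset.measurable_prod _ fun j hj =>
      measurable_const.sub ((hα j (Finset.mem_range.mp hj)).norm.pow_const 2)).div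
    ((measurable_szego hα z).snd.norm.pow_const 2)

theorem measurable_szegoQ (hα : ∀ j < n, Measurable (α j)) (z : ℂ) :
    Measurable fun ω => szegoQ (fun i => α i ω) n z :=
  (measurable_const.mul (measurable_szego hα z).fst).div (measurable_szego hα z).snd

end Measurability

section BernsteinSzego

variable {Ω : Type*} {m mΩ : MeasurableSpace Ω} {P : Measure Ω} [IsProbabilityMeasure P]
  {α : ℕ → Ω → ℂ} {z : ℂ}

theorem setLIntegral_bernsteinSzegoDensity_succ (hz : ‖z‖ = 1) {n : ℕ} (hm : m ≤ mΩ)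
    (hαn : Measurable (α n)) (hadapt : ∀ j < n, Measurable[m] (α j))
    (hindep : Indep m (MeasurableSpace.comap (α n) inferInstance) P)
    [SMulInvariantMeasure Circle ℂ (P.map (α n))] (hdisc : ∀ᵐ ω ∂P, ∀ j, ‖α j ω‖ < 1)
    {s : Set Ω} (hs : MeasurableSet[m] s) :
    ∫⁻ ω in s, ENNReal.ofReal (bernsteinSzegoDensity (fun i => α i ω) (n + 1) z) ∂P =
      ∫⁻ ω in s, ENNReal.ofReal (bernsteinSzegoDensity (fun i => α i ω) n z) ∂P := by
  have := Measure.isProbabilityMeasure_map (μ := P) hαn.aemeasurable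
  set X : ℕ → Ω → ℝ := fun k ω => bernsteinSzegoDensity (fun i => α i ω) k z
  set Q : Ω → ℂ := fun ω => szegoQ (fun i => α i ω) n z
  have hX : Measurable[m] (X n) := measurable_bernsteinSzegoDensity hadapt z
  have hQ : Measurable[m] Q := measurable_szegoQ hadapt z
  have hlaw : ∀ᵐ w ∂(P.map (α n)), ‖w‖ < 1 :=
    (ae_map_iff hαn.aemeasurable (measurableSet_lt measurable_norm measurable_const)).mpr
      (hdisc.mono fun ω hω => hω n)
  have hg : Measurable (Function.uncurry fun (p : ℝ × ℂ) (w : ℂ) =>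
      ENNReal.ofReal p.1 * ENNReal.ofReal (poissonKernel 0 w (conj p.2))) :=
    measurable_fst.fst.ennreal_ofReal.mul (measurable_poissonKernel_zero.comp
      (measurable_snd.prodMk (Complex.continuous_conj.measurable.comp measurable_fst.snd))
      ).ennreal_ofReal
  calc ∫⁻ ω in s, ENNReal.ofReal (X (n + 1) ω) ∂P
      = ∫⁻ ω in s, ENNReal.ofReal (X n ω) *
          ENNReal.ofReal (poissonKernel 0 (α n ω) (conj (Q ω))) ∂P :=
        lintegral_congr_ae <| ae_restrict_of_ae <| hdisc.mono fun ω hω => by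
          dsimp only [X, Q]
          rw [bernsteinSzegoDensity_succ hz fun j _ => hω j,
            ENNReal.ofReal_mul (bernsteinSzegoDensity_nonneg (fun j _ => hω j) z)]
    _ = ∫⁻ ω in s, ∫⁻ w, ENNReal.ofReal (X n ω) *
          ENNReal.ofReal (poissonKernel 0 w (conj (Q ω))) ∂(P.map (α n)) ∂P :=
        setLIntegral_comp_eq_setLIntegral_lintegral_of_indep hm (hX.prodMk hQ) hαn hindep hg hs
    _ = ∫⁻ ω in s, ENNReal.ofReal (X n ω) ∂P :=
        lintegral_congr_ae <| ae_restrict_of_ae <| hdisc.mono fun ω hω => by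
          dsimp only
          rw [lintegral_const_mul _ measurable_poissonKernel_zero.of_uncurry_right.ennreal_ofReal,
            lintegral_poissonKernel_of_smulInvariantMeasure hlaw
              ((Complex.norm_conj _).trans (norm_szegoQ hz fun j _ => hω j)),
            measure_univ, mul_one]

theorem martingale_bernsteinSzegoDensity {ℱ : Filtration ℕ mΩ} (hz : ‖z‖ = 1)
    (hα : ∀ j, Measurable (α j)) (hadapt : ∀ n, ∀ j < n, Measurable[ℱ n] (α j))
    (hindep : ∀ n, Indep (ℱ n) (MeasurableSpace.comap (α n) inferInstance) P)
    (hrot : ∀ n, SMulInvariantMeasure Circle ℂ (P.map (α n)))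
    (hdisc : ∀ n, ∀ᵐ ω ∂P, ‖α n ω‖ < 1) :
    Martingale (fun n ω => bernsteinSzegoDensity (fun i => α i ω) n z) ℱ P := by
  have hdisc' : ∀ᵐ ω ∂P, ∀ j, ‖α j ω‖ < 1 := ae_all_iff.mpr hdisc
  refine martingale_of_setLIntegral_eq_succ
    (fun n => (measurable_bernsteinSzegoDensity (hadapt n) z).stronglyMeasurable)
    (fun n => hdisc'.mono fun ω hω => bernsteinSzegoDensity_nonneg (fun j _ => hω j) z)
    (by simp [bernsteinSzegoDensity_zero]) fun n s hs => ?_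
  have := hrot n
  exact setLIntegral_bernsteinSzegoDensity_succ hz (ℱ.le n) (hα n) (hadapt n) (hindep n) hdisc' hs

end BernsteinSzego

section CbetaE

variable {Ω : Type*} {mΩ : MeasurableSpace Ω} {P : Measure Ω} {β : ℝ} {α : ℕ → Ω → ℂ}

theorem IsCbetaE.smulInvariantMeasure_map (h : IsCbetaE P β α) (n : ℕ) :
    SMulInvariantMeasure Circle ℂ (P.map (α n)) := by
  rw [h.2.2 n]
  infer_instance

theorem IsCbetaE.ae_norm_lt_one (h : IsCbetaE P β α) (n : ℕ) : ∀ᵐ ω ∂P, ‖α n ω‖ < 1 :=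
  (ae_map_iff (h.1 n).aemeasurable (measurableSet_lt measurable_norm measurable_const)).mp
    (h.2.2 n ▸ ae_norm_lt_one_verblunskyLaw _)

end CbetaE

theorem cbe_bernstein_szego_martingale_general {Ω : Type*} {mΩ : MeasurableSpace Ω}
    (P : Measure Ω) [IsProbabilityMeasure P]
    (β : ℝ) (α : ℕ → Ω → ℂ) (hα : IsCbetaE P β α)
    (θ : ℝ) (ℱ : Filtration ℕ mΩ)
    (hℱ : ∀ n, ℱ n = ⨆ j ∈ Set.Iio n, MeasurableSpace.comap (α j) inferInstance) :
    Martingale (fun n ω => (∏ j ∈ Finset.range n, (1 - ‖α j ω‖ ^ 2)) /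
        ‖szegoPhiStar (fun i => α i ω) n (Complex.exp ((θ : ℂ) * Complex.I))‖ ^ 2) ℱ P ∧
    ∀ n, ∫ ω, (∏ j ∈ Finset.range n, (1 - ‖α j ω‖ ^ 2)) /
        ‖szegoPhiStar (fun i => α i ω) n (Complex.exp ((θ : ℂ) * Complex.I))‖ ^ 2 ∂P = 1 := by
  have hadapt : ∀ n, ∀ j < n, Measurable[ℱ n] (α j) := fun n j hj =>
    measurable_iff_comap_le.mpr <| (hℱ n).symm ▸
      le_iSup₂ (f := fun j (_ : j ∈ Set.Iio n) => MeasurableSpace.comap (α j) inferInstance) j hj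
  have hmart : Martingale (fun n ω => bernsteinSzegoDensity (fun i => α i ω) n
      (Complex.exp ((θ : ℂ) * Complex.I))) ℱ P :=
    martingale_bernsteinSzegoDensity (Complex.norm_exp_ofReal_mul_I θ) hα.1 hadapt
      (fun n => hℱ n ▸ hα.2.1.indep_iSup_comap_lt hα.1 n) hα.smulInvariantMeasure_map
      hα.ae_norm_lt_one
  refine ⟨hmart, fun n => ?_⟩
  have h := hmart.setIntegral_eq (Nat.zero_le n) MeasurableSet.univ
  simp only [Measure.restrict_univ, bernsteinSzegoDensity_zero, integral_const, probReal_univ,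
    smul_eq_mul, mul_one] at h
  exact h.symm

/-- Bernstein–Szegő density martingale: for a CβE(β) Verblunsky sequence,
`X_n = Π_{j<n}(1 − |α_j|²)/|Φ_n*(e^{iθ})|²` is an `(F_n)`-martingale, with `E[X_n] = 1`. -/
theorem cbe_bernstein_szego_martingale {Ω : Type*} {mΩ : MeasurableSpace Ω}
    (P : Measure Ω) [IsProbabilityMeasure P]
    (β : ℝ) (hβ : 0 < β) (α : ℕ → Ω → ℂ) (hα : IsCbetaE P β α)
    (θ : ℝ) (ℱ : Filtration ℕ mΩ)
    (hℱ : ∀ n, ℱ n = ⨆ j ∈ Set.Iio n, MeasurableSpace.comap (α j) inferInstance) :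
    Martingale (fun n ω => (∏ j ∈ Finset.range n, (1 - ‖α j ω‖ ^ 2)) /
        ‖szegoPhiStar (fun i => α i ω) n (Complex.exp ((θ : ℂ) * Complex.I))‖ ^ 2) ℱ P ∧
    ∀ n, ∫ ω, (∏ j ∈ Finset.range n, (1 - ‖α j ω‖ ^ 2)) /
        ‖szegoPhiStar (fun i => α i ω) n (Complex.exp ((θ : ℂ) * Complex.I))‖ ^ 2 ∂P = 1 :=
  cbe_bernstein_szego_martingale_general P β α hα θ ℱ hℱ
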